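/- arXiv:1905.12938 — 3 statements merged into one kernel-verified Lean document; each statement's English description precedes it below -/
import Mathlib

section
/- Let ρᵢ(x) ≥ ρ(x) > 1/2 for all i, M ≥ 1, l = ⌊(M+1)/2⌋, and define ‖g‖_{ρ_M} := Σᵢ (2 I(ρᵢ(x); l, l) − 1)|gᵢ|. Then (1 − e^{−(2ρ(x)−1)² l})·‖g‖₁ ≤ ‖g‖_{ρ_M} ≤ ‖g‖₁. -/
/-- The regularized incomplete beta function `I(p; a, b)` (for positive integer
parameters `a, b`). -/
noncomputable def regIncBeta (p : ℝ) (a b : ℕ) : ℝ :=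
  (∫ t in (0 : ℝ)..p, t ^ (a - 1) * (1 - t) ^ (b - 1)) /
    ∫ t in (0 : ℝ)..1, t ^ (a - 1) * (1 - t) ^ (b - 1)

/-!
Write `l = n + 1` and `S(p) = ∫_p^1 (t(1-t))^n dt`. By the symmetry `t ↦ 1 - t`,
`2 I(p; l, l) - 1 = 1 - S(p) / S(1/2)`, so the upper bound is `S ≥ 0` on `[0, 1]`.
For the lower bound, replacing the weight `2t - 1` by the smaller `2p - 1` on `[p, 1]` gives
`4l(2p - 1) S(p) ≤ 4(p(1-p))^l ≤ (p(1-p))^n = -S'(p)`, so `S(p) e^{l(2p-1)²}` is antitone on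
`[1/2, 1]`. This is the Hoeffding-type bound `S(p) ≤ S(1/2) e^{-l(2p-1)²}`, and since `S` is
antitone it passes from `ρ` to every `ρᵢ ≥ ρ`.
-/

open Real Set intervalIntegral

noncomputable section

def symmBetaKernel (n : ℕ) (t : ℝ) : ℝ := t ^ n * (1 - t) ^ n

def betaTail (n : ℕ) (p : ℝ) : ℝ := ∫ t in p..1, symmBetaKernel n t

variable (n : ℕ)

theorem continuous_symmBetaKernel : Continuous (symmBetaKernel n) := by
  unfold symmBetaKernel; fun_prop

theorem intervalIntegrable_symmBetaKernel (a b : ℝ) :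
    IntervalIntegrable (symmBetaKernel n) MeasureTheory.volume a b :=
  (continuous_symmBetaKernel n).intervalIntegrable a b

theorem symmBetaKernel_nonneg {t : ℝ} (h0 : 0 ≤ t) (h1 : t ≤ 1) : 0 ≤ symmBetaKernel n t :=
  mul_nonneg (pow_nonneg h0 n) (pow_nonneg (sub_nonneg.2 h1) n)

theorem symmBetaKernel_one_sub (t : ℝ) : symmBetaKernel n (1 - t) = symmBetaKernel n t := by
  simp only [symmBetaKernel, sub_sub_cancel, mul_comm]

theorem hasDerivAt_betaTail (p : ℝ) : HasDerivAt (betaTail n) (-symmBetaKernel n p) p :=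
  integral_hasDerivAt_left (intervalIntegrable_symmBetaKernel n p 1)
    ((continuous_symmBetaKernel n).stronglyMeasurableAtFilter _ _)
    (continuous_symmBetaKernel n).continuousAt

theorem betaTail_antitoneOn : AntitoneOn (betaTail n) (Icc 0 1) := by
  refine antitoneOn_of_deriv_nonpos (convex_Icc 0 1)
    (fun p _ => (hasDerivAt_betaTail n p).continuousAt.continuousWithinAt)
    (fun p _ => (hasDerivAt_betaTail n p).differentiableAt.differentiableWithinAt) ?_
  intro p hp
  rw [interior_Icc] at hp
  rw [(hasDerivAt_betaTail n p).deriv, neg_nonpos]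
  exact symmBetaKernel_nonneg n hp.1.le hp.2.le

theorem betaTail_nonneg {p : ℝ} (h0 : 0 ≤ p) (h1 : p ≤ 1) : 0 ≤ betaTail n p := by
  simpa [betaTail] using betaTail_antitoneOn n ⟨h0, h1⟩ ⟨zero_le_one, le_rfl⟩ h1

theorem betaTail_pos {p : ℝ} (h0 : 0 ≤ p) (h1 : p < 1) : 0 < betaTail n p := by
  refine intervalIntegral_pos_of_pos_on (intervalIntegrable_symmBetaKernel n p 1) ?_ h1
  intro t ht
  exact mul_pos (pow_pos (h0.trans_lt ht.1) n) (pow_pos (sub_pos.2 ht.2) n)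

theorem betaTail_zero : betaTail n 0 = 2 * betaTail n (1 / 2) := by
  have hsymm : ∫ t in (0 : ℝ)..1 / 2, symmBetaKernel n t = betaTail n (1 / 2) := by
    calc ∫ t in (0 : ℝ)..1 / 2, symmBetaKernel n t
        = ∫ t in (1 / 2 : ℝ)..1, symmBetaKernel n (1 - t) := by
          rw [integral_comp_sub_left]; norm_num
      _ = betaTail n (1 / 2) := by simp only [symmBetaKernel_one_sub, betaTail]
  rw [betaTail, ← integral_add_adjacent_intervals (intervalIntegrable_symmBetaKernel n 0 (1 / 2))
    (intervalIntegrable_symmBetaKernel n _ 1), hsymm, betaTail, two_mul]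

theorem two_mul_regIncBeta_sub_one (p : ℝ) :
    2 * regIncBeta p (n + 1) (n + 1) - 1 = 1 - betaTail n p / betaTail n (1 / 2) := by
  have hsplit : (∫ t in (0 : ℝ)..p, symmBetaKernel n t) + betaTail n p =
      2 * betaTail n (1 / 2) := by
    rw [← betaTail_zero]
    exact integral_add_adjacent_intervals (intervalIntegrable_symmBetaKernel n 0 p)
      (intervalIntegrable_symmBetaKernel n p 1)
  have hhalf := betaTail_pos n (by norm_num : (0 : ℝ) ≤ 1 / 2) (by norm_num)
  simp only [regIncBeta, Nat.add_sub_cancel]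
  change 2 * ((∫ t in (0 : ℝ)..p, symmBetaKernel n t) / betaTail n 0) - 1 = _
  rw [betaTail_zero]
  field_simp
  linarith

theorem integral_mul_symmBetaKernel_eq_pow (p : ℝ) :
    ∫ t in p..1, (n + 1) * (2 * t - 1) * symmBetaKernel n t = (p * (1 - p)) ^ (n + 1) := by
  have hderiv : ∀ t ∈ uIcc p 1, HasDerivAt (fun t : ℝ => -(t * (1 - t)) ^ (n + 1))
      ((n + 1) * (2 * t - 1) * symmBetaKernel n t) t := by
    intro t _
    have h : HasDerivAt (fun t : ℝ => t * (1 - t)) (1 * (1 - t) + t * (0 - 1)) t :=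
      (hasDerivAt_id' t).mul ((hasDerivAt_const t 1).sub (hasDerivAt_id' t))
    refine (h.fun_pow (n + 1)).fun_neg.congr_deriv ?_
    rw [symmBetaKernel, Nat.add_sub_cancel, mul_pow]
    push_cast
    ring
  rw [integral_eq_sub_of_hasDerivAt hderiv (by
    apply Continuous.intervalIntegrable; have := continuous_symmBetaKernel n; fun_prop)]
  simp

theorem mul_betaTail_le_symmBetaKernel {p : ℝ} (h0 : 0 ≤ p) (h1 : p ≤ 1) :
    4 * (n + 1) * (2 * p - 1) * betaTail n p ≤ symmBetaKernel n p := by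
  have hweight : Continuous fun t : ℝ => (n + 1) * (2 * t - 1) * symmBetaKernel n t := by
    have := continuous_symmBetaKernel n; fun_prop
  calc 4 * (n + 1) * (2 * p - 1) * betaTail n p
      = 4 * ∫ t in p..1, (n + 1) * (2 * p - 1) * symmBetaKernel n t := by
        rw [betaTail, integral_const_mul]; ring
    _ ≤ 4 * ∫ t in p..1, (n + 1) * (2 * t - 1) * symmBetaKernel n t := by
        gcongr
        refine integral_mono_on h1 ((intervalIntegrable_symmBetaKernel n p 1).const_mul _)
          (hweight.intervalIntegrable p 1) fun t ht => ?_
        have := symmBetaKernel_nonneg n (h0.trans ht.1) ht.2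
        gcongr
        linarith [ht.1]
    _ = 4 * (p * (1 - p)) * (p * (1 - p)) ^ n := by
        rw [integral_mul_symmBetaKernel_eq_pow, pow_succ]; ring
    _ ≤ 1 * (p * (1 - p)) ^ n := by
        have : 0 ≤ 1 - p := sub_nonneg.2 h1
        gcongr
        nlinarith [sq_nonneg (2 * p - 1)]
    _ = symmBetaKernel n p := by rw [one_mul, symmBetaKernel, mul_pow]

theorem betaTail_le_mul_exp {p : ℝ} (hp : 1 / 2 ≤ p) (hp1 : p ≤ 1) :
    betaTail n p ≤ betaTail n (1 / 2) * exp (-((n + 1) * (2 * p - 1) ^ 2)) := by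
  set F : ℝ → ℝ := fun q => betaTail n q * exp ((n + 1) * (2 * q - 1) ^ 2)
  have hF : ∀ q, HasDerivAt F (exp ((n + 1) * (2 * q - 1) ^ 2) *
      (4 * (n + 1) * (2 * q - 1) * betaTail n q - symmBetaKernel n q)) q := by
    intro q
    have hexp : HasDerivAt (fun q : ℝ => exp ((n + 1) * (2 * q - 1) ^ 2))
        (exp ((n + 1) * (2 * q - 1) ^ 2) * ((n + 1) * (2 * (2 * q - 1) * 2))) q := by
      have := ((((hasDerivAt_id' q).const_mul 2).sub_const 1).fun_pow 2).const_mul ((n : ℝ) + 1)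
      convert this.exp using 2
      norm_num
    refine ((hasDerivAt_betaTail n q).mul hexp).congr_deriv ?_
    ring
  have hanti : AntitoneOn F (Icc (1 / 2) 1) := by
    refine antitoneOn_of_deriv_nonpos (convex_Icc _ _)
      (fun q _ => (hF q).continuousAt.continuousWithinAt)
      (fun q _ => (hF q).differentiableAt.differentiableWithinAt) fun q hq => ?_
    rw [interior_Icc] at hq
    rw [(hF q).deriv]
    have := mul_betaTail_le_symmBetaKernel n (by linarith [hq.1]) hq.2.le
    exact mul_nonpos_of_nonneg_of_nonpos (exp_pos _).le (by linarith)
  have hFp : F p ≤ F (1 / 2) := hanti ⟨le_rfl, by norm_num⟩ ⟨hp, hp1⟩ hp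
  calc betaTail n p = F p * exp (-((n + 1) * (2 * p - 1) ^ 2)) := by
        rw [mul_assoc, ← exp_add, add_neg_cancel, exp_zero, mul_one]
    _ ≤ F (1 / 2) * exp (-((n + 1) * (2 * p - 1) ^ 2)) := by gcongr
    _ = betaTail n (1 / 2) * exp (-((n + 1) * (2 * p - 1) ^ 2)) := by norm_num [F]

theorem two_mul_regIncBeta_sub_one_le_one {p : ℝ} (hp : 0 ≤ p) (hp1 : p ≤ 1) :
    2 * regIncBeta p (n + 1) (n + 1) - 1 ≤ 1 := by
  rw [two_mul_regIncBeta_sub_one]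
  exact sub_le_self 1 (div_nonneg (betaTail_nonneg n hp hp1)
    (betaTail_pos n (by norm_num) (by norm_num)).le)

theorem one_sub_exp_le_two_mul_regIncBeta_sub_one {ρ p : ℝ} (hρ : 1 / 2 ≤ ρ) (hρp : ρ ≤ p)
    (hp1 : p ≤ 1) :
    1 - exp (-((n + 1) * (2 * ρ - 1) ^ 2)) ≤ 2 * regIncBeta p (n + 1) (n + 1) - 1 := by
  have hρ0 : (0 : ℝ) ≤ ρ := by linarith
  rw [two_mul_regIncBeta_sub_one, sub_le_sub_iff_left,
    div_le_iff₀ (betaTail_pos n (by norm_num) (by norm_num))]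
  calc betaTail n p ≤ betaTail n ρ :=
        betaTail_antitoneOn n ⟨hρ0, hρp.trans hp1⟩ ⟨hρ0.trans hρp, hp1⟩ hρp
    _ ≤ betaTail n (1 / 2) * exp (-((n + 1) * (2 * ρ - 1) ^ 2)) :=
        betaTail_le_mul_exp n hρ (hρp.trans hp1)
    _ = _ := mul_comm _ _

end

/-- Exponential approach of the `ρ_M`-norm to the `ℓ¹` norm: with
`ρᵢ ≥ ρ > 1/2` and `l = ⌊(M+1)/2⌋`,
`(1 − e^{−(2ρ−1)²l})‖g‖₁ ≤ ‖g‖_{ρ_M} ≤ ‖g‖₁`. -/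
theorem stmt17 (d M : ℕ) (hM : 1 ≤ M)
    (ρi : Fin d → ℝ) (ρ : ℝ) (hρ : 1 / 2 < ρ)
    (hρi : ∀ i, ρ ≤ ρi i) (hρi1 : ∀ i, ρi i ≤ 1)
    (g : Fin d → ℝ) :
    (1 - Real.exp (-(2 * ρ - 1) ^ 2 * ((M + 1) / 2 : ℕ))) * ∑ i, |g i| ≤
      ∑ i, (2 * regIncBeta (ρi i) ((M + 1) / 2) ((M + 1) / 2) - 1) * |g i| ∧
    ∑ i, (2 * regIncBeta (ρi i) ((M + 1) / 2) ((M + 1) / 2) - 1) * |g i| ≤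
      ∑ i, |g i| := by
  obtain ⟨n, hn⟩ : ∃ n, (M + 1) / 2 = n + 1 := ⟨(M + 1) / 2 - 1, by omega⟩
  have hexp : -(2 * ρ - 1) ^ 2 * ((n + 1 : ℕ) : ℝ) = -((n + 1) * (2 * ρ - 1) ^ 2) := by
    push_cast; ring
  rw [hn, hexp, Finset.mul_sum]
  refine ⟨Finset.sum_le_sum fun i _ => ?_, Finset.sum_le_sum fun i _ => ?_⟩
  · exact mul_le_mul_of_nonneg_right
      (one_sub_exp_le_two_mul_regIncBeta_sub_one n hρ.le (hρi i) (hρi1 i)) (abs_nonneg _)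
  · exact mul_le_of_le_one_left (abs_nonneg _)
      (two_mul_regIncBeta_sub_one_le_one n (by linarith [hρi i]) (hρi1 i))
end

section
/- For any nonzero vectors a, b in an inner product space, −⟨a, b⟩/‖a‖ ≤ −(1/3)‖b‖ + (8/3)‖a − b‖. -/
/-! Since `⟪a, b⟫ = ‖a‖² - ⟪a, a - b⟫`, Cauchy–Schwarz gives
`⟪a, b⟫ / ‖a‖ ≥ ‖a‖ - ‖a - b‖ ≥ ‖b‖ - 2‖a - b‖` by the triangle inequality, and this sharper
bound implies the claimed one without splitting into cases. -/

open scoped RealInnerProductSpace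

theorem norm_sub_norm_sub_le_inner_div_norm {E : Type*} [NormedAddCommGroup E]
    [InnerProductSpace ℝ E] (a b : E) : ‖a‖ - ‖a - b‖ ≤ ⟪a, b⟫ / ‖a‖ := by
  rcases eq_or_ne a 0 with rfl | ha
  · simp
  have hinner : ⟪a, b⟫ = ‖a‖ ^ 2 - ⟪a, a - b⟫ := by
    rw [inner_sub_right, real_inner_self_eq_norm_sq]; ring
  rw [le_div_iff₀ (norm_pos_iff.mpr ha), hinner]
  nlinarith [real_inner_le_norm a (a - b)]

theorem stmt18_general {E : Type*} [NormedAddCommGroup E] [InnerProductSpace ℝ E]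
    (a b : E) :
    -(inner ℝ a b : ℝ) / ‖a‖ ≤ -(1 / 3) * ‖b‖ + (8 / 3) * ‖a - b‖ := by
  have hinner := norm_sub_norm_sub_le_inner_div_norm a b
  have htriangle : ‖b‖ - ‖a‖ ≤ ‖a - b‖ := norm_sub_rev b a ▸ norm_sub_norm_le b a
  rw [neg_div]
  linarith [norm_nonneg b, norm_nonneg (a - b)]

/-- Cutkosky–Mehta lemma: for nonzero vectors `a, b` in a real inner product space,
`−⟨a,b⟩/‖a‖ ≤ −(1/3)‖b‖ + (8/3)‖a − b‖`. -/
theorem stmt18 {E : Type*} [NormedAddCommGroup E] [InnerProductSpace ℝ E]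
    (a b : E) (ha : a ≠ 0) (hb : b ≠ 0) :
    -(inner ℝ a b : ℝ) / ‖a‖ ≤ -(1 / 3) * ‖b‖ + (8 / 3) * ‖a - b‖ :=
  stmt18_general a b
end

section
/- For a nonzero vector g ∈ ℝ^d, define the stochastic sign s ∈ {−1,+1}^d with independent coordinates where sᵢ = +1 with probability 1/2 + gᵢ/(2‖g‖) and sᵢ = −1 with probability 1/2 − gᵢ/(2‖g‖) (‖g‖ the Euclidean norm). Then: (1) E[‖g‖·s] = g (unbiasedness with scaling ‖g‖); and (2) for every i with gᵢ ≠ 0, Prob(sᵢ = sign gᵢ) = 1/2 + |gᵢ|/(2‖g‖) > 1/2. -/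
/-!
A `±1`-valued random variable `X` is determined by `p = P(X = 1)`: writing `X = 2·𝟙{X = 1} - 1`
gives `E[X] = 2p - 1`, and so `P(X = t) = (1 + t E[X]) / 2` for `t = ±1`. With
`p = 1/2 + gᵢ/(2‖g‖)` this makes `E[sᵢ] = gᵢ/‖g‖`, and taking `t = sign gᵢ` turns `t gᵢ` into `|gᵢ|`.
-/

open MeasureTheory ProbabilityTheory

lemma Real.sign_mul_self_eq_abs (r : ℝ) : Real.sign r * r = |r| := by
  rcases lt_trichotomy r 0 with hr | rfl | hr
  · rw [Real.sign_of_neg hr, abs_of_neg hr, neg_one_mul]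
  · simp
  · rw [Real.sign_of_pos hr, abs_of_pos hr, one_mul]

lemma Real.sign_eq_self_of_eq_neg_one_or_eq_one {r : ℝ} (hr : r = -1 ∨ r = 1) :
    Real.sign r = r := by
  rcases hr with rfl | rfl
  · rw [Real.sign_neg, Real.sign_one]
  · exact Real.sign_one

lemma abs_le_sqrt_sum_sq {ι : Type*} [Fintype ι] (g : ι → ℝ) (i : ι) :
    |g i| ≤ √(∑ j, g j ^ 2) :=
  Real.abs_le_sqrt (Finset.single_le_sum (fun j _ => sq_nonneg (g j)) (Finset.mem_univ i))

lemma half_add_div_two_mul_nonneg {a N : ℝ} (h : |a| ≤ N) : 0 ≤ 1 / 2 + a / (2 * N) := by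
  rcases (abs_nonneg a).trans h |>.eq_or_lt with hN | hN
  · simp [← hN]
  · have : -N ≤ a := neg_le_of_abs_le h
    have : -(1 / 2 : ℝ) ≤ a / (2 * N) := by
      rw [le_div_iff₀ (by positivity)]
      linarith
    linarith

section PlusMinusOne

variable {Ω : Type*} [MeasurableSpace Ω] {μ : Measure Ω} [IsProbabilityMeasure μ]
  {X : Ω → ℝ}

lemma integral_eq_two_mul_measureReal_sub_one (hX : Measurable X)
    (hval : ∀ ω, X ω = -1 ∨ X ω = 1) :
    ∫ ω, X ω ∂μ = 2 * μ.real {ω | X ω = 1} - 1 := by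
  have hA : MeasurableSet {ω | X ω = 1} := hX (measurableSet_singleton 1)
  have hrepr : ∀ ω, X ω = 2 * {ω | X ω = 1}.indicator (fun _ => (1 : ℝ)) ω - 1 := fun ω => by
    rcases hval ω with h | h
    · rw [Set.indicator_of_notMem (by simp [h]; norm_num)]
      simp [h]
    · simp [h]
      norm_num
  have hint : Integrable ({ω | X ω = 1}.indicator fun _ => (1 : ℝ)) μ :=
    (integrable_const 1).indicator hA
  rw [integral_congr_ae (ae_of_all _ hrepr), integral_sub (hint.const_mul 2) (integrable_const 1), integral_const_mul,
    integral_indicator_const _ hA, integral_const, probReal_univ]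
  simp

lemma measureReal_eq_neg_one (hX : Measurable X) (hval : ∀ ω, X ω = -1 ∨ X ω = 1) :
    μ.real {ω | X ω = -1} = 1 - μ.real {ω | X ω = 1} := by
  have hcompl : {ω | X ω = 1}ᶜ = {ω | X ω = -1} := by
    ext ω
    rcases hval ω with h | h <;> simp [h] <;> norm_num
  rw [← hcompl]
  exact probReal_compl_eq_one_sub (hX (measurableSet_singleton 1))

lemma measureReal_eq_of_eq_neg_one_or_eq_one (hX : Measurable X)
    (hval : ∀ ω, X ω = -1 ∨ X ω = 1) {t : ℝ} (ht : t = -1 ∨ t = 1) :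
    μ.real {ω | X ω = t} = (1 + t * ∫ ω, X ω ∂μ) / 2 := by
  rw [integral_eq_two_mul_measureReal_sub_one hX hval]
  rcases ht with rfl | rfl
  · rw [measureReal_eq_neg_one hX hval]
    ring
  · ring

end PlusMinusOne

theorem stmt19_general
    {Ω : Type*} [MeasureSpace Ω] [IsProbabilityMeasure (ℙ : Measure Ω)]
    (d : ℕ) (g : Fin d → ℝ)
    (s : Fin d → Ω → ℝ) (hmeas : ∀ i, Measurable (s i))
    (hval : ∀ i ω, s i ω = -1 ∨ s i ω = 1)
    (hp : ∀ i, ℙ {ω | s i ω = 1} =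
      ENNReal.ofReal (1 / 2 + g i / (2 * Real.sqrt (∑ j, (g j) ^ 2)))) :
    (∀ i, ∫ ω, Real.sqrt (∑ j, (g j) ^ 2) * s i ω = g i) ∧
    (∀ i, g i ≠ 0 →
      (ℙ {ω | Real.sign (s i ω) = Real.sign (g i)}).toReal =
          1 / 2 + |g i| / (2 * Real.sqrt (∑ j, (g j) ^ 2)) ∧
      (1 : ℝ) / 2 < 1 / 2 + |g i| / (2 * Real.sqrt (∑ j, (g j) ^ 2))) := by
  set N := √(∑ j, g j ^ 2)
  have hmean : ∀ i, ∫ ω, s i ω = g i / N := fun i => by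
    rw [integral_eq_two_mul_measureReal_sub_one (hmeas i) (hval i), measureReal_def, hp i,
      ENNReal.toReal_ofReal (half_add_div_two_mul_nonneg (abs_le_sqrt_sum_sq g i))]
    ring
  refine ⟨fun i => ?_, fun i hgi => ?_⟩
  · rw [integral_const_mul, hmean i]
    exact mul_div_cancel_of_imp' fun hN => abs_nonpos_iff.mp (hN ▸ abs_le_sqrt_sum_sq g i)
  have hN : 0 < N := (abs_pos.mpr hgi).trans_le (abs_le_sqrt_sum_sq g i)
  have hsign : {ω | Real.sign (s i ω) = Real.sign (g i)} = {ω | s i ω = Real.sign (g i)} := by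
    simp only [Real.sign_eq_self_of_eq_neg_one_or_eq_one (hval i _)]
  refine ⟨?_, lt_add_of_pos_right _ (div_pos (abs_pos.mpr hgi) (by positivity))⟩
  rw [← measureReal_def, hsign, measureReal_eq_of_eq_neg_one_or_eq_one (hmeas i) (hval i)
    (Real.sign_apply_eq_of_ne_zero _ hgi), hmean i, mul_div_assoc', Real.sign_mul_self_eq_abs]
  field_simp

/-- The stochastic sign of a nonzero `g ∈ ℝ^d`: independent `±1` coordinates with
`Prob(sᵢ = +1) = 1/2 + gᵢ/(2‖g‖)`. It is unbiased after scaling by `‖g‖`, and it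
satisfies the SPB condition `Prob(sᵢ = sign gᵢ) = 1/2 + |gᵢ|/(2‖g‖) > 1/2`. -/
theorem stmt19
    {Ω : Type*} [MeasureSpace Ω] [IsProbabilityMeasure (ℙ : Measure Ω)]
    (d : ℕ) (g : Fin d → ℝ) (hg : g ≠ 0)
    (s : Fin d → Ω → ℝ) (hmeas : ∀ i, Measurable (s i))
    (hindep : iIndepFun (m := fun _ => (inferInstance : MeasurableSpace ℝ)) s ℙ)
    (hval : ∀ i ω, s i ω = -1 ∨ s i ω = 1)
    (hp : ∀ i, ℙ {ω | s i ω = 1} =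
      ENNReal.ofReal (1 / 2 + g i / (2 * Real.sqrt (∑ j, (g j) ^ 2)))) :
    (∀ i, ∫ ω, Real.sqrt (∑ j, (g j) ^ 2) * s i ω = g i) ∧
    (∀ i, g i ≠ 0 →
      (ℙ {ω | Real.sign (s i ω) = Real.sign (g i)}).toReal =
          1 / 2 + |g i| / (2 * Real.sqrt (∑ j, (g j) ^ 2)) ∧
      (1 : ℝ) / 2 < 1 / 2 + |g i| / (2 * Real.sqrt (∑ j, (g j) ^ 2))) :=
  stmt19_general d g s hmeas hval hp
end
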